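/- Let u, v ∈ ℂⁿ (n ≥ 2) with v having pairwise distinct coordinates, and 1 ≤ p ≤ ∞. If ‖(u - v)/d(v)‖_p < 1/2, then u also has pairwise distinct coordinates. -/

import Mathlib

/-! If `u` were not injective, say `u i = u j` with `i ≠ j`, then the triangle inequality through
`u i = u j` would give `‖v i - v j‖ ≤ ‖u i - v i‖ + ‖u j - v j‖`. But every coordinate of an
`ℓ^p` vector is bounded by its norm, so `‖u k - v k‖ < dmin v k / 2` for all `k`, and both
`dmin v i` and `dmin v j` are at most `‖v i - v j‖`. -/

open scoped ENNReal

noncomputable def pnorm (p : ℝ≥0∞) {n : ℕ} (w : Fin n → ℝ) : ℝ :=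
  ‖(WithLp.equiv p (Fin n → ℝ)).symm w‖

noncomputable def dmin {n : ℕ} (v : Fin n → ℂ) (i : Fin n) : ℝ :=
  ⨅ j : {j : Fin n // j ≠ i}, ‖v i - v j.1‖

lemma abs_le_pnorm {p : ℝ≥0∞} (hp : 1 ≤ p) {n : ℕ} (w : Fin n → ℝ) (k : Fin n) :
    |w k| ≤ pnorm p w :=
  haveI : Fact (1 ≤ p) := ⟨hp⟩
  PiLp.norm_apply_le ((WithLp.equiv p (Fin n → ℝ)).symm w) k

section dmin

variable {n : ℕ} {v : Fin n → ℂ} {i j : Fin n}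

lemma dmin_le_norm_sub (hji : j ≠ i) : dmin v i ≤ ‖v i - v j‖ :=
  ciInf_le (Finite.bddBelow_range _) (⟨j, hji⟩ : {j : Fin n // j ≠ i})

lemma dmin_pos (hv : Function.Injective v) (hji : j ≠ i) : 0 < dmin v i := by
  have : Nonempty {j : Fin n // j ≠ i} := ⟨⟨j, hji⟩⟩
  obtain ⟨k, hk⟩ := exists_eq_ciInf_of_finite (f := fun k : {j : Fin n // j ≠ i} => ‖v i - v k.1‖)
  rw [dmin, ← hk, norm_pos_iff, sub_ne_zero]
  exact fun h => k.2 (hv h).symm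

lemma norm_sub_lt_half_dmin {u : Fin n → ℂ} (hv : Function.Injective v) (hji : j ≠ i)
    (h : ‖u i - v i‖ / dmin v i < 1 / 2) : ‖u i - v i‖ < dmin v i / 2 := by
  rwa [div_lt_iff₀ (dmin_pos hv hji), one_div_mul_eq_div] at h

theorem injective_of_forall_div_dmin_lt_half {u : Fin n → ℂ} (hv : Function.Injective v)
    (h : ∀ k, ‖u k - v k‖ / dmin v k < 1 / 2) : Function.Injective u := by
  intro i j hij
  by_contra hne
  have hi := norm_sub_lt_half_dmin hv (Ne.symm hne) (h i)
  have hj := norm_sub_lt_half_dmin hv hne (h j)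
  have hdi : dmin v i ≤ ‖v i - v j‖ := dmin_le_norm_sub (Ne.symm hne)
  have hdj : dmin v j ≤ ‖v i - v j‖ := norm_sub_rev (v j) (v i) ▸ dmin_le_norm_sub hne
  have htri : ‖v i - v j‖ ≤ ‖u i - v i‖ + ‖u j - v j‖ := by
    calc ‖v i - v j‖ = ‖(u j - v j) - (u i - v i)‖ := by rw [hij]; ring_nf
      _ ≤ ‖u i - v i‖ + ‖u j - v j‖ := by rw [add_comm]; exact norm_sub_le _ _
  linarith

end dmin

theorem u_distinct_components_general (n : ℕ) (u v : Fin n → ℂ)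
    (hv : Function.Injective v) (p : ℝ≥0∞) (hp : 1 ≤ p)
    (h : pnorm p (fun k => ‖u k - v k‖ / dmin v k) < 1/2) :
    Function.Injective u :=
  injective_of_forall_div_dmin_lt_half hv fun k =>
    (le_abs_self _).trans_lt ((abs_le_pnorm hp _ k).trans_lt h)

theorem u_distinct_components (n : ℕ) (hn : 2 ≤ n) (u v : Fin n → ℂ)
    (hv : Function.Injective v) (p : ℝ≥0∞) (hp : 1 ≤ p)
    (h : pnorm p (fun k => ‖u k - v k‖ / dmin v k) < 1/2) :
    Function.Injective u :=
  u_distinct_components_general n u v hv p hp h
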